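/- arXiv:1107.4904 — 4 statements merged into one kernel-verified Lean document; each statement's English description precedes it below -/
import Mathlib

section
/- For 0 ≤ k ≤ n, define the iterated integral G_{n,k}(t) = ∫₀^t ds₁ ∫_{s₁}^t ds₂ ⋯ ∫_{s_{k−1}}^t ds_k [(t−s_k)^{n−k}/(n−k)!] ∏_{j=1}^k cosh c(s_j − s_{j−1}) · cosh c(t − s_k) with s₀ = 0. Then for γ > c > 0, ∫₀^∞ e^{−γt} G_{n,k}(t) dt = (γ/(γ² − c²))^k · (1/2)[1/(γ−c)^{n−k+1} + 1/(γ+c)^{n−k+1}]. -/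
/-!
By its recursion, `G c n k` is the `k`-fold causal convolution of `cosh (c ·)` with
`t ^ (n - k) / (n - k)! * cosh (c t)`. The Laplace transform turns causal convolution into
multiplication (Fubini applies thanks to the bound `|G c n k t| ≤ t ^ N * exp (|c| t)`), the
transform of `cosh (c ·)` is `γ / (γ ^ 2 - c ^ 2)`, and that of `t ^ m / m! * cosh (c t)` is
`(1 / 2) ((γ - c) ^ (-(m + 1)) + (γ + c) ^ (-(m + 1)))`, as `cosh` is the mean of two
exponentials.
-/

open Real MeasureTheory intervalIntegral

/-- `G c n k t` is the iterated integral
`∫₀ᵗ ds₁ ⋯ ∫_{s_{k-1}}ᵗ ds_k ((t-s_k)^{n-k}/(n-k)!) ∏_{j=1}^k cosh c(s_j-s_{j-1}) · cosh c(t-s_k)`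
(with `s₀ = 0`), written through its convolution recursion. -/
noncomputable def G (c : ℝ) : ℕ → ℕ → ℝ → ℝ
  | n, 0, t => t ^ n / n.factorial * Real.cosh (c * t)
  | n, k + 1, t => ∫ s in (0:ℝ)..t, Real.cosh (c * s) * G c (n - 1) k (t - s)

open Set
open scoped Convolution Interval

noncomputable def laplace (f : ℝ → ℝ) (γ : ℝ) : ℝ :=
  ∫ t in Ioi (0:ℝ), exp (-γ * t) * f t

-- Extended by zero to `t ≤ 0`, so that causal convolution becomes convolution on `ℝ`.
noncomputable def expDamped (γ : ℝ) (f : ℝ → ℝ) : ℝ → ℝ :=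
  (Ioi 0).indicator fun t => exp (-γ * t) * f t

lemma integral_expDamped (γ : ℝ) (f : ℝ → ℝ) : ∫ t, expDamped γ f t = laplace f γ :=
  MeasureTheory.integral_indicator measurableSet_Ioi

lemma integrable_expDamped_iff {γ : ℝ} {f : ℝ → ℝ} :
    Integrable (expDamped γ f) ↔ IntegrableOn (fun t => exp (-γ * t) * f t) (Ioi 0) :=
  integrable_indicator_iff measurableSet_Ioi

lemma expDamped_mul_expDamped_sub (γ : ℝ) (f g : ℝ → ℝ) (t s : ℝ) :
    expDamped γ f s * expDamped γ g (t - s) =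
      (Ioo 0 t).indicator (fun s => exp (-γ * t) * (f s * g (t - s))) s := by
  have hexp : exp (-γ * t) = exp (-γ * s) * exp (-γ * (t - s)) := by
    rw [← exp_add]; ring_nf
  by_cases hs : s ∈ Ioo 0 t
  · rw [indicator_of_mem hs, expDamped, expDamped, indicator_of_mem (show s ∈ Ioi 0 from hs.1),
      indicator_of_mem (show t - s ∈ Ioi 0 from sub_pos.2 hs.2), hexp]
    ring
  · rw [indicator_of_notMem hs]
    simp only [expDamped, indicator_apply, mem_Ioi, sub_pos]
    split_ifs <;> simp_all

lemma expDamped_convolution (γ : ℝ) (f g : ℝ → ℝ) :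
    expDamped γ f ⋆[ContinuousLinearMap.lsmul ℝ ℝ] expDamped γ g =
      expDamped γ fun t => ∫ s in (0:ℝ)..t, f s * g (t - s) := by
  ext t
  simp only [convolution_lsmul, smul_eq_mul, expDamped_mul_expDamped_sub,
    MeasureTheory.integral_indicator measurableSet_Ioo, MeasureTheory.integral_const_mul]
  rcases le_or_gt t 0 with ht | ht
  · simp [expDamped, not_lt.2 ht]
  · rw [expDamped, indicator_of_mem (mem_Ioi.2 ht), integral_of_le ht.le,
      integral_Ioc_eq_integral_Ioo]

theorem laplace_convolution {γ : ℝ} {f g : ℝ → ℝ}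
    (hf : IntegrableOn (fun t => exp (-γ * t) * f t) (Ioi 0))
    (hg : IntegrableOn (fun t => exp (-γ * t) * g t) (Ioi 0)) :
    laplace (fun t => ∫ s in (0:ℝ)..t, f s * g (t - s)) γ = laplace f γ * laplace g γ := by
  rw [← integral_expDamped, ← expDamped_convolution,
    integral_convolution _ (integrable_expDamped_iff.2 hf) (integrable_expDamped_iff.2 hg),
    integral_expDamped, integral_expDamped]
  rfl

lemma integrableOn_pow_mul_exp_neg_mul {b : ℝ} (hb : 0 < b) (n : ℕ) :
    IntegrableOn (fun t => t ^ n * exp (-b * t)) (Ioi 0) := by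
  refine (integrableOn_rpow_mul_exp_neg_mul_rpow (s := n) (by linarith [n.cast_nonneg (α := ℝ)])
    one_pos hb).congr_fun (fun t _ => ?_) measurableSet_Ioi
  simp only [rpow_natCast, rpow_one]

lemma integral_pow_mul_exp_neg_mul {b : ℝ} (hb : 0 < b) (n : ℕ) :
    ∫ t in Ioi 0, t ^ n * exp (-b * t) = n.factorial / b ^ (n + 1) := by
  have h := Real.integral_rpow_mul_exp_neg_mul_Ioi (a := n + 1) (by positivity) hb
  rw [add_sub_cancel_right, Real.Gamma_nat_eq_factorial, ← Nat.cast_succ, rpow_natCast] at h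
  convert h using 1
  · simp only [rpow_natCast, neg_mul]
  · rw [Nat.succ_eq_add_one, one_div_pow, div_eq_mul_one_div, mul_comm]

lemma abs_cosh_mul_le (c : ℝ) {t : ℝ} (ht : 0 ≤ t) : |cosh (c * t)| ≤ exp (|c| * t) := by
  rw [abs_of_nonneg (cosh_pos _).le, ← cosh_abs, abs_mul, abs_of_nonneg ht, cosh_eq]
  linarith [exp_le_exp.2 (neg_le_self (by positivity : 0 ≤ |c| * t))]

lemma integrableOn_laplace_of_abs_le {f : ℝ → ℝ} {a γ : ℝ} {m : ℕ} (hf : Continuous f)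
    (hγ : a < γ) (hbound : ∀ t, 0 ≤ t → |f t| ≤ t ^ m * exp (a * t)) :
    IntegrableOn (fun t => exp (-γ * t) * f t) (Ioi 0) := by
  refine (integrableOn_pow_mul_exp_neg_mul (sub_pos.2 hγ) m).mono' (by fun_prop) ?_
  filter_upwards [ae_restrict_mem measurableSet_Ioi] with t ht
  calc ‖exp (-γ * t) * f t‖ = exp (-γ * t) * |f t| := by
        rw [norm_mul, norm_of_nonneg (exp_pos _).le, norm_eq_abs]
    _ ≤ exp (-γ * t) * (t ^ m * exp (a * t)) := by gcongr; exact hbound t (le_of_lt ht)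
    _ = t ^ m * exp (-(γ - a) * t) := by
        rw [show -(γ - a) * t = -γ * t + a * t by ring, exp_add]; ring

lemma laplace_pow_div_factorial_mul_cosh {c γ : ℝ} (hγ : |c| < γ) (n : ℕ) :
    laplace (fun t => t ^ n / n.factorial * cosh (c * t)) γ =
      1 / 2 * (1 / (γ - c) ^ (n + 1) + 1 / (γ + c) ^ (n + 1)) := by
  obtain ⟨hγc, hγc'⟩ : 0 < γ - c ∧ 0 < γ + c := by
    constructor <;> linarith [neg_abs_le c, le_abs_self c]
  have hsplit : ∀ t, exp (-γ * t) * (t ^ n / n.factorial * cosh (c * t)) =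
      (2 * (n.factorial : ℝ))⁻¹ * (t ^ n * exp (-(γ - c) * t) + t ^ n * exp (-(γ + c) * t)) := by
    intro t
    rw [cosh_eq, show -(γ - c) * t = -γ * t + c * t by ring,
      show -(γ + c) * t = -γ * t + -(c * t) by ring, exp_add, exp_add]
    field_simp
  simp only [laplace, hsplit]
  rw [MeasureTheory.integral_const_mul, integral_add (integrableOn_pow_mul_exp_neg_mul hγc n)
    (integrableOn_pow_mul_exp_neg_mul hγc' n), integral_pow_mul_exp_neg_mul hγc,
    integral_pow_mul_exp_neg_mul hγc']
  field_simp

lemma laplace_cosh {c γ : ℝ} (hγ : |c| < γ) :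
    laplace (fun t => cosh (c * t)) γ = γ / (γ ^ 2 - c ^ 2) := by
  have h := laplace_pow_div_factorial_mul_cosh hγ 0
  simp only [pow_zero, Nat.factorial_zero, Nat.cast_one, div_one, one_mul] at h
  obtain ⟨hγc, hγc'⟩ : γ - c ≠ 0 ∧ γ + c ≠ 0 := by
    constructor <;> apply ne_of_gt <;> linarith [neg_abs_le c, le_abs_self c]
  rw [h, show γ ^ 2 - c ^ 2 = (γ - c) * (γ + c) by ring]
  field_simp
  ring

lemma continuous_G (c : ℝ) (n k : ℕ) : Continuous (G c n k) := by
  induction k generalizing n with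
  | zero => exact (by fun_prop : Continuous fun t => t ^ n / n.factorial * cosh (c * t))
  | succ k ih =>
    have hG := ih (n - 1)
    exact continuous_parametric_intervalIntegral_of_continuous (by fun_prop) continuous_id

-- Not `t ^ n`: once the truncated `n - 1` reaches `0`, each convolution still adds a factor `t`.
lemma abs_G_le (c : ℝ) (n k : ℕ) {t : ℝ} (ht : 0 ≤ t) :
    |G c n k t| ≤ t ^ max n k * exp (|c| * t) := by
  induction k generalizing n t with
  | zero =>
    change |t ^ n / n.factorial * cosh (c * t)| ≤ _
    rw [abs_of_nonneg (by positivity), max_eq_left (Nat.zero_le n)]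
    gcongr
    · exact div_le_self (by positivity) (Nat.one_le_cast.2 n.factorial_pos)
    · exact (le_abs_self _).trans (abs_cosh_mul_le c ht)
  | succ k ih =>
    have hintegrand : ∀ s ∈ Ι 0 t, ‖cosh (c * s) * G c (n - 1) k (t - s)‖ ≤
        t ^ max (n - 1) k * exp (|c| * t) := by
      intro s hs
      rw [uIoc_of_le ht] at hs
      calc ‖cosh (c * s) * G c (n - 1) k (t - s)‖
          ≤ exp (|c| * s) * ((t - s) ^ max (n - 1) k * exp (|c| * (t - s))) := by
            rw [norm_mul, norm_eq_abs, norm_eq_abs]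
            exact mul_le_mul (abs_cosh_mul_le c hs.1.le) (ih (n - 1) (sub_nonneg.2 hs.2))
              (abs_nonneg _) (exp_pos _).le
        _ ≤ exp (|c| * s) * (t ^ max (n - 1) k * exp (|c| * (t - s))) := by
            gcongr
            · linarith [hs.2]
            · linarith [hs.1]
        _ = t ^ max (n - 1) k * exp (|c| * t) := by
            rw [show |c| * t = |c| * s + |c| * (t - s) by ring, exp_add]; ring
    calc |G c n (k + 1) t| ≤ t ^ max (n - 1) k * exp (|c| * t) * |t - 0| :=
          norm_integral_le_of_norm_le_const hintegrand
      _ = t ^ max n (k + 1) * exp (|c| * t) := by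
          rw [sub_zero, abs_of_nonneg ht, show max n (k + 1) = max (n - 1) k + 1 by omega,
            pow_succ]
          ring

lemma integrableOn_laplace_G {c γ : ℝ} (hγ : |c| < γ) (n k : ℕ) :
    IntegrableOn (fun t => exp (-γ * t) * G c n k t) (Ioi 0) :=
  integrableOn_laplace_of_abs_le (continuous_G c n k) hγ fun _ ht => abs_G_le c n k ht

lemma integrableOn_laplace_cosh {c γ : ℝ} (hγ : |c| < γ) :
    IntegrableOn (fun t => exp (-γ * t) * cosh (c * t)) (Ioi 0) :=
  integrableOn_laplace_of_abs_le (m := 0) (by fun_prop) hγ fun _ ht => by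
    simpa using abs_cosh_mul_le c ht

theorem laplace_G_general (c γ : ℝ) (n k : ℕ) (hc : 0 < c) (hγ : c < γ) :
    ∫ t in Set.Ioi (0:ℝ), Real.exp (-γ * t) * G c n k t =
      (γ / (γ ^ 2 - c ^ 2)) ^ k *
        ((1 / 2) * (1 / (γ - c) ^ (n - k + 1) + 1 / (γ + c) ^ (n - k + 1))) := by
  have hγ' : |c| < γ := by rwa [abs_of_pos hc]
  induction k generalizing n with
  | zero => simpa [laplace, G] using laplace_pow_div_factorial_mul_cosh hγ' n
  | succ k ih =>
    change laplace (fun t => ∫ s in (0:ℝ)..t, cosh (c * s) * G c (n - 1) k (t - s)) γ = _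
    rw [laplace_convolution (integrableOn_laplace_cosh hγ') (integrableOn_laplace_G hγ' _ _),
      laplace_cosh hγ', laplace, ih, Nat.sub_sub, add_comm 1 k, pow_succ]
    ring

theorem laplace_G (c γ : ℝ) (n k : ℕ) (hc : 0 < c) (hγ : c < γ) (hkn : k ≤ n) :
    ∫ t in Set.Ioi (0:ℝ), Real.exp (-γ * t) * G c n k t =
      (γ / (γ ^ 2 - c ^ 2)) ^ k *
        ((1 / 2) * (1 / (γ - c) ^ (n - k + 1) + 1 / (γ + c) ^ (n - k + 1))) :=
  laplace_G_general c γ n k hc hγ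
end

section
/- For 0 ≤ k ≤ n−2, the function G_{n,k}(t) = ∫₀^t ds₁ ⋯ ∫_{s_{k−1}}^t ds_k [(t−s_k)^{n−k}/(n−k)!] ∏_{j=1}^k cosh c(s_j − s_{j−1}) · cosh c(t − s_k) (with s₀ = 0) satisfies the difference-differential equation G_{n,k}''(t) = 2 G_{n−1,k}'(t) − G_{n−2,k}(t) + c² G_{n,k}(t). -/
/-!
Write `C g t = ∫₀ᵗ cosh (c (t - s)) g s ds` and `S g` for the same with `sinh`, so that
`G_{n,k+1} = C G_{n-1,k}`. The addition formula for `cosh` turns `C g` into a combination of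
primitives, whence `(C g)' = g + c S g`; integrating by parts, `C g' = g - cosh (c t) g 0 + c S g`.
So `C` commutes with `d/dt` on functions vanishing at `0`. Since `G_{n,k}` and `G_{n,k}'` vanish
at `0` for `n ≥ 2`, applying `C` to the equation for `G_{n-1,k}` yields the one for `G_{n,k+1}`,
and the case `k = 0` is a direct computation with `t ^ n / n! * cosh (c t)`.
-/

open Real MeasureTheory intervalIntegral

open scoped ContDiff

section Convolution

variable {c : ℝ} {g h : ℝ → ℝ}

noncomputable def coshConv (c : ℝ) (g : ℝ → ℝ) (t : ℝ) : ℝ :=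
  ∫ s in (0:ℝ)..t, cosh (c * (t - s)) * g s

noncomputable def sinhConv (c : ℝ) (g : ℝ → ℝ) (t : ℝ) : ℝ :=
  ∫ s in (0:ℝ)..t, sinh (c * (t - s)) * g s

@[simp]
lemma coshConv_apply_zero (c : ℝ) (g : ℝ → ℝ) : coshConv c g 0 = 0 := by
  simp [coshConv]

lemma coshConv_add (hg : Continuous g) (hh : Continuous h) :
    coshConv c (g + h) = coshConv c g + coshConv c h := by
  ext t
  simp only [coshConv, Pi.add_apply, mul_add]
  exact integral_add ((by fun_prop : Continuous _).intervalIntegrable _ _)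
    ((by fun_prop : Continuous _).intervalIntegrable _ _)

lemma coshConv_sub (hg : Continuous g) (hh : Continuous h) :
    coshConv c (g - h) = coshConv c g - coshConv c h := by
  ext t
  simp only [coshConv, Pi.sub_apply, mul_sub]
  exact integral_sub ((by fun_prop : Continuous _).intervalIntegrable _ _)
    ((by fun_prop : Continuous _).intervalIntegrable _ _)

lemma coshConv_smul (a : ℝ) : coshConv c (a • g) = a • coshConv c g := by
  ext t
  simp only [coshConv, Pi.smul_apply, smul_eq_mul, mul_left_comm _ a,
    intervalIntegral.integral_const_mul]

lemma coshConv_eq (hg : Continuous g) (t : ℝ) :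
    coshConv c g t = cosh (c * t) * (∫ s in (0:ℝ)..t, cosh (c * s) * g s)
      - sinh (c * t) * ∫ s in (0:ℝ)..t, sinh (c * s) * g s := by
  rw [coshConv, ← intervalIntegral.integral_const_mul, ← intervalIntegral.integral_const_mul,
    ← integral_sub ((by fun_prop : Continuous _).intervalIntegrable _ _)
    ((by fun_prop : Continuous _).intervalIntegrable _ _)]
  refine integral_congr fun s _ => ?_
  simp only [mul_sub, cosh_sub]
  ring

lemma sinhConv_eq (hg : Continuous g) (t : ℝ) :
    sinhConv c g t = sinh (c * t) * (∫ s in (0:ℝ)..t, cosh (c * s) * g s)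
      - cosh (c * t) * ∫ s in (0:ℝ)..t, sinh (c * s) * g s := by
  rw [sinhConv, ← intervalIntegral.integral_const_mul, ← intervalIntegral.integral_const_mul,
    ← integral_sub ((by fun_prop : Continuous _).intervalIntegrable _ _)
    ((by fun_prop : Continuous _).intervalIntegrable _ _)]
  refine integral_congr fun s _ => ?_
  simp only [mul_sub, sinh_sub]
  ring

lemma hasDerivAt_coshConv (hg : Continuous g) (t : ℝ) :
    HasDerivAt (coshConv c g) (g t + c * sinhConv c g t) t := by
  have hA := (by fun_prop : Continuous fun s => cosh (c * s) * g s).integral_hasStrictDerivAt 0 t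
  have hB := (by fun_prop : Continuous fun s => sinh (c * s) * g s).integral_hasStrictDerivAt 0 t
  have hcosh := ((hasDerivAt_id' t).const_mul c).cosh
  have hsinh := ((hasDerivAt_id' t).const_mul c).sinh
  rw [show coshConv c g = _ from funext (coshConv_eq hg), sinhConv_eq hg]
  refine ((hcosh.fun_mul hA.hasDerivAt).fun_sub (hsinh.fun_mul hB.hasDerivAt)).congr_deriv ?_
  linear_combination g t * cosh_sq_sub_sinh_sq (c * t)

lemma coshConv_deriv (hg : ContDiff ℝ 1 g) (t : ℝ) :
    coshConv c (deriv g) t = g t - cosh (c * t) * g 0 + c * sinhConv c g t := by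
  have hkernel (s : ℝ) :
      HasDerivAt (fun s => cosh (c * (t - s))) (-(c * sinh (c * (t - s)))) s := by
    convert (((hasDerivAt_id' s).const_sub t).const_mul c).cosh using 1
    ring
  rw [coshConv, intervalIntegral.integral_mul_deriv_eq_deriv_mul (fun s _ => hkernel s)
    (fun s _ => (hg.differentiable one_ne_zero s).hasDerivAt)
    ((by fun_prop : Continuous _).intervalIntegrable _ _)
    ((hg.continuous_deriv le_rfl).intervalIntegrable _ _)]
  simp only [sinhConv, neg_mul, intervalIntegral.integral_neg, mul_assoc,
    intervalIntegral.integral_const_mul, sub_self, mul_zero, cosh_zero, sub_zero]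
  ring

lemma deriv_coshConv (hg : ContDiff ℝ 1 g) (h0 : g 0 = 0) :
    deriv (coshConv c g) = coshConv c (deriv g) := by
  ext t
  rw [(hasDerivAt_coshConv hg.continuous t).deriv, coshConv_deriv hg, h0]
  ring

lemma ContDiff.primitive {f : ℝ → ℝ} (hf : ContDiff ℝ ∞ f) :
    ContDiff ℝ ∞ fun u => ∫ s in (0:ℝ)..u, f s := by
  refine contDiff_infty_iff_deriv.2
    ⟨fun t => (hf.continuous.integral_hasStrictDerivAt 0 t).hasDerivAt.differentiableAt, ?_⟩
  rwa [funext (hf.continuous.deriv_integral _ 0)]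

lemma ContDiff.coshConv (hg : ContDiff ℝ ∞ g) : ContDiff ℝ ∞ (coshConv c g) := by
  rw [funext (coshConv_eq hg.continuous)]
  have hA := (by fun_prop : ContDiff ℝ ∞ fun s => Real.cosh (c * s) * g s).primitive
  have hB := (by fun_prop : ContDiff ℝ ∞ fun s => Real.sinh (c * s) * g s).primitive
  fun_prop

end Convolution

section G

variable (c : ℝ)

lemma G_succ (n k : ℕ) : G c n (k + 1) = coshConv c (G c (n - 1) k) := by
  ext t
  simpa [G, coshConv] using
    integral_comp_sub_left (fun s => cosh (c * (t - s)) * G c (n - 1) k s) t (a := 0) (b := t)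

lemma contDiff_G (n k : ℕ) : ContDiff ℝ ∞ (G c n k) := by
  induction k generalizing n with
  | zero => exact (by fun_prop : ContDiff ℝ ∞ fun t : ℝ => t ^ n / n.factorial * cosh (c * t))
  | succ k ih => rw [G_succ]; exact (ih _).coshConv

lemma G_apply_zero {n k : ℕ} (h : n + k ≠ 0) : G c n k 0 = 0 := by
  cases k with
  | zero => simp_all [G]
  | succ k => simp [G_succ]

lemma deriv_G_succ_succ {n k : ℕ} (h : n + k ≠ 0) :
    deriv (G c (n + 1) (k + 1)) = coshConv c (deriv (G c n k)) := by
  rw [G_succ, Nat.add_sub_cancel, deriv_coshConv ((contDiff_G c n k).of_le (by simp))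
    (G_apply_zero c h)]

lemma hasDerivAt_pow_div_factorial (n : ℕ) (t : ℝ) :
    HasDerivAt (fun t : ℝ => t ^ (n + 1) / (n + 1).factorial) (t ^ n / n.factorial) t := by
  refine ((hasDerivAt_pow (n + 1) t).div_const _).congr_deriv ?_
  rw [Nat.factorial_succ]
  push_cast
  field_simp

lemma deriv_G_zero (n : ℕ) :
    deriv (G c (n + 1) 0) =
      fun t => G c n 0 t + c * (t ^ (n + 1) / (n + 1).factorial * sinh (c * t)) := by
  ext t
  refine ((hasDerivAt_pow_div_factorial n t).mul
    ((hasDerivAt_id' t).const_mul c).cosh).deriv.trans ?_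
  simp only [G]
  ring

lemma deriv_G_apply_zero {n : ℕ} (k : ℕ) (hn : 2 ≤ n) : deriv (G c n k) 0 = 0 := by
  obtain ⟨m, rfl⟩ : ∃ m, n = m + 1 := ⟨n - 1, by omega⟩
  cases k with
  | zero => simp [deriv_G_zero, G_apply_zero c (n := m) (k := 0) (by omega)]
  | succ k => simp [deriv_G_succ_succ c (n := m) (k := k) (by omega)]

lemma G_ode_zero (n : ℕ) (hn : 2 ≤ n) (t : ℝ) :
    deriv (deriv (G c n 0)) t =
      2 * deriv (G c (n - 1) 0) t - G c (n - 2) 0 t + c ^ 2 * G c n 0 t := by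
  obtain ⟨m, rfl⟩ : ∃ m, n = m + 2 := ⟨n - 2, by omega⟩
  have hG := ((contDiff_G c (m + 1) 0).differentiable (by simp) t).hasDerivAt
  have hsinh := (hasDerivAt_pow_div_factorial (m + 1) t).fun_mul
    ((hasDerivAt_id' t).const_mul c).sinh
  rw [deriv_G_zero] at hG ⊢
  rw [(hG.fun_add (hsinh.const_mul c)).deriv, show m + 2 - 1 = m + 1 from rfl, deriv_G_zero]
  simp only [G, Nat.add_sub_cancel]
  ring

lemma deriv_deriv_G_succ_succ {n : ℕ} (k : ℕ) (hn : 2 ≤ n) :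
    deriv (deriv (G c (n + 1) (k + 1))) = coshConv c (deriv (deriv (G c n k))) := by
  rw [deriv_G_succ_succ c (by omega), deriv_coshConv
    ((contDiff_infty_iff_deriv.1 (contDiff_G c n k)).2.of_le (by simp))
    (deriv_G_apply_zero c k hn)]

end G

theorem G_ode_general (c : ℝ) (n k : ℕ) (hkn : k + 2 ≤ n) (t : ℝ) :
    deriv (deriv (G c n k)) t =
      2 * deriv (G c (n - 1) k) t - G c (n - 2) k t + c ^ 2 * G c n k t := by
  induction k generalizing n t with
  | zero => exact G_ode_zero c n hkn t
  | succ k ih =>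
    obtain ⟨m, rfl⟩ : ∃ m, n = m + 3 := ⟨n - 3, by omega⟩
    have hG := contDiff_G c
    have hdG (n : ℕ) := (contDiff_infty_iff_deriv.1 (hG n k)).2
    have hode : deriv (deriv (G c (m + 2) k)) =
        (2 : ℝ) • deriv (G c (m + 1) k) - G c m k + c ^ 2 • G c (m + 2) k := by
      ext t
      simpa using ih (m + 2) (by omega) t
    rw [deriv_deriv_G_succ_succ c k (by omega), hode, coshConv_add (by fun_prop) (by fun_prop),
      coshConv_sub (by fun_prop) (by fun_prop), coshConv_smul, coshConv_smul,
      show m + 3 - 1 = m + 2 from rfl, show m + 3 - 2 = m + 1 from rfl,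
      deriv_G_succ_succ c (n := m + 1) (by omega), G_succ, G_succ]
    rfl

theorem G_ode (c : ℝ) (n k : ℕ) (hc : 0 < c) (hkn : k + 2 ≤ n) (t : ℝ) (ht : 0 < t) :
    deriv (deriv (G c n k)) t =
      2 * deriv (G c (n - 1) k) t - G c (n - 2) k t + c ^ 2 * G c n k t :=
  G_ode_general c n k hkn t
end

section
/- Define u(t) = e^{−λt/2} Σ_{n=0}^∞ (λ/2)^n G_{n,n}(t), where G_{n,n}(t) = ∫ over 0 < s₁ < ⋯ < s_n < t of ∏_{j=1}^{n+1} cosh c(s_j − s_{j−1}) (s₀ = 0, s_{n+1} = t). Then u(t) = (e^{−λt/4}/2)[(1 + λ/√(λ² + 16c²)) e^{(t/4)√(λ² + 16c²)} + (1 − λ/√(λ² + 16c²)) e^{−(t/4)√(λ² + 16c²)}]. -/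
open Real MeasureTheory intervalIntegral

/-!
The functions `G c n n` are the Neumann series of the Volterra equation
`u = cosh (c ·) + (λ/2) · (cosh (c ·) ⋆ u)`,
where `(k ⋆ f) t = ∫₀ᵗ k s * f (t - s) ds` is `volterra k f t`. If `|k| ≤ M` on `[0, t]`,
the `n`-th iterate of `k ⋆ ·` shrinks like `(M t)ⁿ / n!`, so the series converges to every
continuous solution.
One solution is `(p e^{pt} - r e^{rt}) / (p - r)`, where `p, r = (λ ± √(λ² + 16 c²)) / 4`
are the roots of `z² = (λ/2) z + c²`, because
`(p² - c²) ∫₀ᵗ cosh (c s) e^{p (t - s)} ds = p (e^{pt} - cosh (c t)) - c sinh (c t)`.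
-/

open Filter Topology Finset Set Nat

noncomputable def volterra (k f : ℝ → ℝ) (t : ℝ) : ℝ :=
  ∫ s in (0:ℝ)..t, k s * f (t - s)

section Volterra

variable {k f g u : ℝ → ℝ} {x : ℝ}

theorem continuous_volterra (hk : Continuous k) (hf : Continuous f) :
    Continuous (volterra k f) :=
  continuous_parametric_intervalIntegral_of_continuous
    ((hk.comp continuous_snd).mul (hf.comp (continuous_fst.sub continuous_snd))) continuous_id

theorem continuous_iterate_volterra (hk : Continuous k) (hf : Continuous f) (n : ℕ) :
    Continuous ((volterra k)^[n] f) := by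
  induction n with
  | zero => exact hf
  | succ n ih => simpa only [Function.iterate_succ_apply'] using continuous_volterra hk ih

theorem volterra_add (hk : Continuous k) (hf : Continuous f) (hg : Continuous g) :
    volterra k (f + g) = volterra k f + volterra k g := by
  funext t
  simp only [volterra, Pi.add_apply, mul_add]
  exact integral_add ((by fun_prop : Continuous _).intervalIntegrable _ _)
    ((by fun_prop : Continuous _).intervalIntegrable _ _)

theorem volterra_smul (a : ℝ) : volterra k (a • f) = a • volterra k f := by
  funext t
  simp only [volterra, Pi.smul_apply, smul_eq_mul, ← intervalIntegral.integral_const_mul,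
    mul_left_comm]

theorem abs_volterra_le {M C t : ℝ} {N : ℕ} (ht : 0 ≤ t) (hk : ∀ s ∈ Icc 0 t, |k s| ≤ M)
    (hf : ∀ s ∈ Icc 0 t, |f s| ≤ C * s ^ N / N !) :
    |volterra k f t| ≤ M * C * t ^ (N + 1) / (N + 1)! := by
  have hM : 0 ≤ M := (abs_nonneg _).trans (hk 0 ⟨le_rfl, ht⟩)
  calc |volterra k f t|
      ≤ ∫ s in (0:ℝ)..t, M * (C * (t - s) ^ N / N !) := by
        rw [volterra, ← Real.norm_eq_abs]
        refine norm_integral_le_of_norm_le ht (ae_of_all _ fun s hs => ?_)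
          ((by fun_prop : Continuous fun s : ℝ => M * (C * (t - s) ^ N / N !)).intervalIntegrable
            _ _)
        rw [Real.norm_eq_abs, abs_mul]
        have hts : t - s ∈ Icc 0 t := ⟨by linarith [hs.2], by linarith [hs.1]⟩
        exact mul_le_mul (hk s (Ioc_subset_Icc_self hs)) (hf _ hts) (abs_nonneg _) hM
    _ = M * C * t ^ (N + 1) / (N + 1)! := by
        simp only [intervalIntegral.integral_const_mul, intervalIntegral.integral_div,
          intervalIntegral.integral_comp_sub_left (fun s => s ^ N), integral_pow]
        push_cast [Nat.factorial_succ]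
        field_simp
        ring

theorem abs_iterate_volterra_le {M C t : ℝ} (hk : ∀ s ∈ Icc 0 t, |k s| ≤ M)
    (hf : ∀ s ∈ Icc 0 t, |f s| ≤ C) (n : ℕ) :
    ∀ s ∈ Icc 0 t, |(volterra k)^[n] f s| ≤ C * (M * s) ^ n / n ! := by
  induction n with
  | zero => simpa using hf
  | succ n ih =>
    intro s hs
    have hsub : Icc 0 s ⊆ Icc 0 t := Icc_subset_Icc_right hs.2
    rw [Function.iterate_succ_apply']
    refine (abs_volterra_le hs.1 (fun u hu => hk u (hsub hu))
      (C := C * M ^ n) fun u hu => ?_).trans_eq (by ring)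
    simpa only [mul_pow, mul_div_assoc, mul_assoc] using ih u (hsub hu)

theorem iterate_volterra_eq_add (hk : Continuous k) (hg : Continuous g) (hu : Continuous u)
    (h : u = g + x • volterra k u) (n : ℕ) :
    (volterra k)^[n] u = (volterra k)^[n] g + x • (volterra k)^[n + 1] u := by
  induction n with
  | zero => simpa using h
  | succ n ih =>
    rw [Function.iterate_succ_apply', ih, volterra_add hk (continuous_iterate_volterra hk hg n)
      ((continuous_iterate_volterra hk hu (n + 1)).const_smul x), volterra_smul,
      ← Function.iterate_succ_apply' (volterra k) n g,
      ← Function.iterate_succ_apply' (volterra k) (n + 1) u]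

theorem eq_sum_add_iterate_volterra (hk : Continuous k) (hg : Continuous g) (hu : Continuous u)
    (h : u = g + x • volterra k u) (N : ℕ) :
    u = ∑ n ∈ range N, x ^ n • (volterra k)^[n] g + x ^ N • (volterra k)^[N] u := by
  induction N with
  | zero => simp
  | succ N ih =>
    nth_rw 1 [ih]
    rw [iterate_volterra_eq_add hk hg hu h N, smul_add, sum_range_succ, pow_succ, mul_smul,
      add_assoc]

theorem hasSum_volterra_neumann {t : ℝ} (hk : Continuous k) (hg : Continuous g)
    (hu : Continuous u) (h : ∀ t, u t = g t + x * volterra k u t) (ht : 0 ≤ t) :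
    HasSum (fun n => x ^ n * (volterra k)^[n] g t) (u t) := by
  have hI : IsCompact (Icc 0 t) := isCompact_Icc
  obtain ⟨M, hM⟩ := hI.exists_bound_of_continuousOn hk.continuousOn
  obtain ⟨Cg, hCg⟩ := hI.exists_bound_of_continuousOn hg.continuousOn
  obtain ⟨Cu, hCu⟩ := hI.exists_bound_of_continuousOn hu.continuousOn
  have bound : ∀ {f : ℝ → ℝ} {C : ℝ}, (∀ s ∈ Icc 0 t, ‖f s‖ ≤ C) →
      ∀ n, ‖x ^ n * (volterra k)^[n] f t‖ ≤ C * (|x| * M * t) ^ n / n ! := by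
    intro f C hf n
    calc ‖x ^ n * (volterra k)^[n] f t‖ = |x| ^ n * |(volterra k)^[n] f t| := by
          rw [Real.norm_eq_abs, abs_mul, abs_pow]
      _ ≤ |x| ^ n * (C * (M * t) ^ n / n !) := by
          gcongr
          exact abs_iterate_volterra_le hM hf n t ⟨ht, le_rfl⟩
      _ = C * (|x| * M * t) ^ n / n ! := by ring
  have hsum : Summable fun n => ‖x ^ n * (volterra k)^[n] g t‖ :=
    .of_nonneg_of_le (fun n => norm_nonneg _) (bound hCg)
      (((Real.summable_pow_div_factorial (|x| * M * t)).mul_left Cg).congr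
        fun n => (mul_div_assoc _ _ _).symm)
  rw [hasSum_iff_tendsto_nat_of_summable_norm hsum]
  have hrem : Tendsto (fun N => x ^ N * (volterra k)^[N] u t) atTop (𝓝 0) :=
    squeeze_zero_norm (bound hCu)
      (by simpa [mul_div_assoc] using (FloorSemiring.tendsto_pow_div_factorial_atTop
        (|x| * M * t)).const_mul Cu)
  have hpart : ∀ N, ∑ n ∈ range N, x ^ n * (volterra k)^[n] g t =
      u t - x ^ N * (volterra k)^[N] u t := fun N => by
    have := congrFun (eq_sum_add_iterate_volterra hk hg hu (funext h) N) t
    simp only [Pi.add_apply, Finset.sum_apply, Pi.smul_apply, smul_eq_mul] at this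
    linarith
  simp_rw [hpart]
  simpa using hrem.const_sub (u t)

end Volterra

theorem G_diag_eq_iterate_volterra (c : ℝ) (n : ℕ) :
    G c n n = (volterra fun s => cosh (c * s))^[n] fun t => cosh (c * t) := by
  induction n with
  | zero => funext t; simp [G]
  | succ n ih => funext t; rw [Function.iterate_succ_apply', ← ih]; simp [G, volterra]

theorem volterra_cosh_exp (c p t : ℝ) :
    (p ^ 2 - c ^ 2) * volterra (fun s => cosh (c * s)) (fun s => exp (p * s)) t =
      p * (exp (p * t) - cosh (c * t)) - c * sinh (c * t) := by
  have hF : ∀ s ∈ uIcc 0 t, HasDerivAt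
      (fun s => -(exp (p * (t - s)) * (p * cosh (c * s) + c * sinh (c * s))))
      ((p ^ 2 - c ^ 2) * (cosh (c * s) * exp (p * (t - s)))) s := by
    intro s _
    have hcs : HasDerivAt (fun s => c * s) c s := by simpa using (hasDerivAt_id s).const_mul c
    have hexp : HasDerivAt (fun s => exp (p * (t - s))) (exp (p * (t - s)) * -p) s := by
      simpa using (((hasDerivAt_id s).const_sub t).const_mul p).exp
    exact (hexp.fun_mul ((hcs.cosh.const_mul p).fun_add (hcs.sinh.const_mul c))).fun_neg
      |>.congr_deriv (by ring)
  rw [volterra, ← intervalIntegral.integral_const_mul,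
    integral_eq_sub_of_hasDerivAt hF ((by fun_prop : Continuous _).intervalIntegrable _ _)]
  simp only [sub_self, mul_zero, exp_zero, one_mul, neg_add_rev, sub_zero, cosh_zero, mul_one,
    sinh_zero, add_zero, sub_neg_eq_add]
  ring

theorem volterra_cosh_exp_combination {c x p r : ℝ} (hp : p ^ 2 = x * p + c ^ 2)
    (hr : r ^ 2 = x * r + c ^ 2) (hpr : p ≠ r) (t : ℝ) :
    (p * exp (p * t) - r * exp (r * t)) / (p - r) =
      cosh (c * t) + x * volterra (fun s => cosh (c * s))
        (fun s => (p * exp (p * s) - r * exp (r * s)) / (p - r)) t := by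
  have hlin : volterra (fun s => cosh (c * s))
      (fun s => (p * exp (p * s) - r * exp (r * s)) / (p - r)) t =
      (p * volterra (fun s => cosh (c * s)) (fun s => exp (p * s)) t -
        r * volterra (fun s => cosh (c * s)) (fun s => exp (r * s)) t) / (p - r) := by
    simp only [volterra]
    rw [← intervalIntegral.integral_const_mul, ← intervalIntegral.integral_const_mul,
      ← integral_sub ((by fun_prop : Continuous _).intervalIntegrable _ _)
        ((by fun_prop : Continuous _).intervalIntegrable _ _), ← intervalIntegral.integral_div]
    congr 1
    ext s
    ring
  have hsub : p - r ≠ 0 := sub_ne_zero.2 hpr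
  have hVp := volterra_cosh_exp c p t
  have hVr := volterra_cosh_exp c r t
  rw [hlin]
  generalize volterra (fun s => cosh (c * s)) (fun s => exp (p * s)) t = Vp at hVp ⊢
  generalize volterra (fun s => cosh (c * s)) (fun s => exp (r * s)) t = Vr at hVr ⊢
  rw [mul_div_assoc', add_div' _ _ _ hsub, div_left_inj' hsub]
  linear_combination hVr - hVp + Vp * hp - Vr * hr

theorem mean_distance_single_particle_general (c l : ℝ) (hc : 0 < c)
    (t : ℝ) (ht : 0 ≤ t) :
    Real.exp (-l * t / 2) * ∑' n : ℕ, (l / 2) ^ n * G c n n t =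
      Real.exp (-l * t / 4) / 2 *
        ((1 + l / Real.sqrt (l ^ 2 + 16 * c ^ 2)) *
            Real.exp (t / 4 * Real.sqrt (l ^ 2 + 16 * c ^ 2)) +
          (1 - l / Real.sqrt (l ^ 2 + 16 * c ^ 2)) *
            Real.exp (-(t / 4) * Real.sqrt (l ^ 2 + 16 * c ^ 2))) := by
  set q := √(l ^ 2 + 16 * c ^ 2)
  have hq2 : q ^ 2 = l ^ 2 + 16 * c ^ 2 := sq_sqrt (by positivity)
  have hq : 0 < q := sqrt_pos.2 (by positivity)
  have hp : ((l + q) / 4) ^ 2 = l / 2 * ((l + q) / 4) + c ^ 2 := by linear_combination hq2 / 16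
  have hr : ((l - q) / 4) ^ 2 = l / 2 * ((l - q) / 4) + c ^ 2 := by linear_combination hq2 / 16
  have hsum := hasSum_volterra_neumann (by fun_prop) (by fun_prop) (by fun_prop)
    (volterra_cosh_exp_combination hp hr (by linarith)) ht
  simp only [← G_diag_eq_iterate_volterra] at hsum
  have hexp : ∀ z,
      exp (-l * t / 2) * exp ((l + z) / 4 * t) = exp (-l * t / 4) * exp (t / 4 * z) := fun z => by
    rw [← exp_add, ← exp_add]
    ring_nf
  rw [hsum.tsum_eq, mul_div_assoc', mul_sub, mul_left_comm, mul_left_comm _ ((l - q) / 4),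
    hexp, sub_eq_add_neg l q, hexp, mul_neg, ← neg_mul]
  field_simp [hq.ne']
  ring

theorem mean_distance_single_particle (c l : ℝ) (hc : 0 < c) (hl : 0 < l)
    (t : ℝ) (ht : 0 ≤ t) :
    Real.exp (-l * t / 2) * ∑' n : ℕ, (l / 2) ^ n * G c n n t =
      Real.exp (-l * t / 4) / 2 *
        ((1 + l / Real.sqrt (l ^ 2 + 16 * c ^ 2)) *
            Real.exp (t / 4 * Real.sqrt (l ^ 2 + 16 * c ^ 2)) +
          (1 - l / Real.sqrt (l ^ 2 + 16 * c ^ 2)) *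
            Real.exp (-(t / 4) * Real.sqrt (l ^ 2 + 16 * c ^ 2))) :=
  mean_distance_single_particle_general c l hc t ht
end

section
/- The function u(t) = (8c² e^{−3λt/4}/√(λ²+16c²))[e^{−(t/4)√(λ²+16c²)}/(3√(λ²+16c²)+5λ) + e^{(t/4)√(λ²+16c²)}/(3√(λ²+16c²)−5λ)] + ((λ+2c)/(2(λ+3c))) e^{ct} + ((λ−2c)/(2(λ−3c))) e^{−ct} satisfies the ODE u'' − c²u = (λc² e^{−3λt/4}/√(λ²+16c²))[e^{−(t/4)√(λ²+16c²)} − e^{(t/4)√(λ²+16c²)}] for all t. -/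
/-! Expanding the products of exponentials, `u` is a combination of `exp (r * t)` with
`r ∈ {-(3λ + R)/4, (R - 3λ)/4, c, -c}`, and `f ↦ f'' - c² f` multiplies `exp (r * t)` by
`r² - c²`. This kills the two homogeneous terms, and since `R² = λ² + 16c²` the first two roots
give `r² - c² = ± λ (3R ± 5λ) / 8`, which cancels the denominators `3R ± 5λ`. -/

open Real

theorem hasDerivAt_sum_const_mul_exp {ι : Type*} (s : Finset ι) (A a : ι → ℝ) (t : ℝ) :
    HasDerivAt (fun x => ∑ i ∈ s, A i * exp (a i * x))
      (∑ i ∈ s, A i * a i * exp (a i * t)) t := by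
  refine HasDerivAt.fun_sum fun i _ => ?_
  simpa [mul_comm, mul_left_comm, mul_assoc] using
    (((hasDerivAt_id t).const_mul (a i)).exp).const_mul (A i)

theorem deriv_deriv_sum_const_mul_exp {ι : Type*} (s : Finset ι) (A a : ι → ℝ) (t : ℝ) :
    deriv (deriv fun x => ∑ i ∈ s, A i * exp (a i * x)) t =
      ∑ i ∈ s, A i * a i ^ 2 * exp (a i * t) := by
  have hderiv : deriv (fun x => ∑ i ∈ s, A i * exp (a i * x)) =
      fun x => ∑ i ∈ s, A i * a i * exp (a i * x) :=
    funext fun x => (hasDerivAt_sum_const_mul_exp s A a x).deriv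
  rw [hderiv, (hasDerivAt_sum_const_mul_exp s (fun i => A i * a i) a t).deriv]
  simp only [sq, mul_assoc]

theorem deriv_deriv_sub_sq_mul_sum_const_mul_exp {ι : Type*} (s : Finset ι) (A a : ι → ℝ)
    (c t : ℝ) :
    let f := fun x => ∑ i ∈ s, A i * exp (a i * x)
    deriv (deriv f) t - c ^ 2 * f t = ∑ i ∈ s, A i * (a i ^ 2 - c ^ 2) * exp (a i * t) := by
  simp only [deriv_deriv_sum_const_mul_exp, Finset.mul_sum, ← Finset.sum_sub_distrib]
  exact Finset.sum_congr rfl fun i _ => by ring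

theorem three_mul_sqrt_sub_five_mul_ne_zero {l c : ℝ} (hc : 0 < c) (hne : l ≠ 3 * c) :
    3 * √(l ^ 2 + 16 * c ^ 2) - 5 * l ≠ 0 := by
  intro h
  have hR2 := Real.sq_sqrt (by positivity : (0 : ℝ) ≤ l ^ 2 + 16 * c ^ 2)
  have hR := Real.sqrt_nonneg (l ^ 2 + 16 * c ^ 2)
  -- `3R = 5λ` forces `λ² = 9c²` with `λ ≥ 0`
  exact hne (by nlinarith)

theorem center_of_mass_ode (l c : ℝ) (hl : 0 < l) (hc : 0 < c) (hne : l ≠ 3 * c) :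
    let R := Real.sqrt (l ^ 2 + 16 * c ^ 2)
    let u : ℝ → ℝ := fun t =>
      8 * c ^ 2 * Real.exp (-(3 * l * t) / 4) / R *
          (Real.exp (-(t / 4) * R) / (3 * R + 5 * l) +
            Real.exp ((t / 4) * R) / (3 * R - 5 * l)) +
        (l + 2 * c) / (2 * (l + 3 * c)) * Real.exp (c * t) +
        (l - 2 * c) / (2 * (l - 3 * c)) * Real.exp (-(c * t))
    ∀ t : ℝ,
      deriv (deriv u) t - c ^ 2 * u t =
        l * c ^ 2 * Real.exp (-(3 * l * t) / 4) / R *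
          (Real.exp (-(t / 4) * R) - Real.exp ((t / 4) * R)) := by
  intro R u t
  have hR : 0 < R := Real.sqrt_pos.mpr (by positivity)
  have hR2 : R ^ 2 = l ^ 2 + 16 * c ^ 2 := Real.sq_sqrt (by positivity)
  have hplus : 3 * R + 5 * l ≠ 0 := by positivity
  have hminus : 3 * R - 5 * l ≠ 0 := three_mul_sqrt_sub_five_mul_ne_zero hc hne
  set a := -(3 * l + R) / 4
  set b := (R - 3 * l) / 4
  have ha : a ^ 2 - c ^ 2 = l * (3 * R + 5 * l) / 8 := by linear_combination hR2 / 16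
  have hb : b ^ 2 - c ^ 2 = -(l * (3 * R - 5 * l) / 8) := by linear_combination hR2 / 16
  have hexp_a : ∀ x, exp (-(3 * l * x) / 4) * exp (-(x / 4) * R) = exp (a * x) := fun x => by
    rw [← exp_add]; congr 1; ring
  have hexp_b : ∀ x, exp (-(3 * l * x) / 4) * exp ((x / 4) * R) = exp (b * x) := fun x => by
    rw [← exp_add]; congr 1; ring
  have hu : u = fun x => ∑ i : Fin 4,
      ![8 * c ^ 2 / R / (3 * R + 5 * l), 8 * c ^ 2 / R / (3 * R - 5 * l),
        (l + 2 * c) / (2 * (l + 3 * c)), (l - 2 * c) / (2 * (l - 3 * c))] i *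
      exp (![a, b, c, -c] i * x) := by
    funext x
    simp only [Fin.sum_univ_four, Matrix.cons_val, u]
    rw [← hexp_a, ← hexp_b, neg_mul c x]
    ring
  have hcoeff : ∀ k ≠ 0, 8 * c ^ 2 / R / k * (l * k / 8) = l * c ^ 2 / R := fun k hk => by
    field_simp
  rw [hu, deriv_deriv_sub_sq_mul_sum_const_mul_exp]
  simp only [Fin.sum_univ_four, Matrix.cons_val, ha, hb, neg_sq, sub_self, mul_zero, zero_mul,
    add_zero, mul_neg, hcoeff _ hplus, hcoeff _ hminus, ← hexp_a, ← hexp_b]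
  ring
end
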